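/- Suppose f : G → H is a functor of groupoids inducing surjections on all automorphism groups, and consider the (strict) pullback P of a replacement of f by an isofibration along a functor g : N → H. Then the induced square of path-component sets π₀(P) → π₀(G), π₀(P) → π₀(N), π₀(G) → π₀(H), π₀(N) → π₀(H) is a pullback square of sets. -/
import Mathlib


/-!
STATEMENT 3: Suppose `f : G → H` is a functor of groupoids inducing surjections on all
automorphism groups.  Replace `f` by the isofibration `π : G ×_H H^I → H` (objects
`(x, ω : f x ⟶ z)` mapping to `z`) and let `P` be the strict pullback of `π` along a
functor `g : N → H`.  Then the induced square of path-component sets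
`π₀(P) → π₀(G)`, `π₀(P) → π₀(N)`, `π₀(G) → π₀(H)`, `π₀(N) → π₀(H)` is a pullback of sets.
-/

open CategoryTheory

/-- The set of path components (isomorphism classes of objects) of a groupoid. -/
def pi0 (C : Type*) [Groupoid C] : Type _ :=
  Quot (fun a b : C => Nonempty (a ≅ b))

/-- The map on path components induced by a functor. -/
def pi0Map {C D : Type*} [Groupoid C] [Groupoid D] (f : C ⥤ D) :
    pi0 C → pi0 D :=
  Quot.lift (fun a => Quot.mk _ (f.obj a)) (by
    intro a b ⟨e⟩
    exact Quot.sound ⟨f.mapIso e⟩)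

section

variable {G H N : Type*} [Groupoid G] [Groupoid H] [Groupoid N]
  (f : G ⥤ H) (g : N ⥤ H)

/-- An object of the strict pullback `P` of `π : G ×_H H^I → H` along `g : N → H`:
a triple `(n, x, ω : f x ⟶ g n)` (the object `(x, ω : f x ⟶ z)` of `G ×_H H^I` together
with an object `n` of `N` such that `z = g n`). -/
structure PullbackOb where
  n : N
  x : G
  ω : f.obj x ⟶ g.obj n

/-- Two objects of `P` are isomorphic iff there are morphisms `m : x ⟶ x'` in `G` and
`k : n ⟶ n'` in `N` compatible with the structure maps. -/
def PRel (p q : PullbackOb f g) : Prop :=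
  ∃ (m : p.x ⟶ q.x) (k : p.n ⟶ q.n), p.ω ≫ g.map k = f.map m ≫ q.ω

/-- The set of path components of the strict pullback `P`. -/
def pi0P : Type _ := Quot (PRel f g)

/-- `π₀(P) → π₀(N)`. -/
def toN : pi0P f g → pi0 N :=
  Quot.lift (fun p => Quot.mk _ p.n) (by
    rintro p q ⟨m, k, _⟩
    exact Quot.sound ⟨Groupoid.isoEquivHom _ _ |>.symm k⟩)

/-- `π₀(P) → π₀(G)`. -/
def toG : pi0P f g → pi0 G :=
  Quot.lift (fun p => Quot.mk _ p.x) (by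
    rintro p q ⟨m, k, _⟩
    exact Quot.sound ⟨Groupoid.isoEquivHom _ _ |>.symm m⟩)

lemma square_commutes (p : pi0P f g) :
    pi0Map g (toN f g p) = pi0Map f (toG f g p) := by
  induction p using Quot.ind with
  | _ p => exact Quot.sound ⟨Groupoid.isoEquivHom _ _ |>.symm
      (inv p.ω : g.obj p.n ⟶ f.obj p.x)⟩

end

lemma iso_equiv {C : Type*} [Groupoid C] :
    Equivalence (fun a b : C => Nonempty (a ≅ b)) :=
  ⟨fun a => ⟨Iso.refl a⟩, fun ⟨e⟩ => ⟨e.symm⟩, fun ⟨e⟩ ⟨e'⟩ => ⟨e.trans e'⟩⟩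

lemma pi0_eq {C : Type*} [Groupoid C] {a b : C} :
    (Quot.mk _ a : pi0 C) = Quot.mk _ b ↔ Nonempty (a ≅ b) := by
  exact ⟨fun h => iso_equiv.eqvGen_iff.mp (Quot.eqvGen_exact h),
    fun ⟨e⟩ => Quot.sound ⟨e⟩⟩

theorem stmt_3 {G H N : Type*} [Groupoid G] [Groupoid H] [Groupoid N]
    (f : G ⥤ H) (g : N ⥤ H)
    (hsurj : ∀ (x : G), Function.Surjective
      (fun m : x ⟶ x => (f.map m : f.obj x ⟶ f.obj x))) :
    -- the square of path components is a pullback of sets: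
    Function.Bijective (fun p : pi0P f g =>
      (⟨(toN f g p, toG f g p), square_commutes f g p⟩ :
        {q : pi0 N × pi0 G // pi0Map g q.1 = pi0Map f q.2})) := by
  constructor
  · intro p q h
    induction p using Quot.ind with | _ p =>
    induction q using Quot.ind with | _ q =>
    simp only [Subtype.mk.injEq, Prod.mk.injEq] at h
    obtain ⟨hn, hx⟩ := h
    obtain ⟨k⟩ := pi0_eq.mp hn
    obtain ⟨m⟩ := pi0_eq.mp hx
    obtain ⟨u, hu⟩ := hsurj p.x
      (p.ω ≫ g.map k.hom ≫ inv q.ω ≫ inv (f.map m.hom))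
    apply Quot.sound
    refine ⟨u ≫ m.hom, k.hom, ?_⟩
    simp only at hu
    simp [Functor.map_comp, hu]
  · rintro ⟨⟨qn, qx⟩, hq⟩
    induction qn using Quot.ind with | _ n =>
    induction qx using Quot.ind with | _ x =>
    obtain ⟨e⟩ := pi0_eq.mp hq
    exact ⟨Quot.mk _ ⟨n, x, e.inv⟩, rfl⟩
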